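/- (Capacity from the smallest positive pole.) Let w : ℕ → ℝ be a weight sequence satisfying the density condition and let N : ℕ → ℝ be coefficients. Let p, q ≥ 1, let n₁,…,n_p and d₁,…,d_q be real numbers, let τ₁,…,τ_p ≥ 0 and ν₁,…,ν_q ≥ 0 be real exponents, and set Nm(y) = ∑_{i=1}^p n_i·y^(τ_i) and D(y) = ∑_{j=1}^q d_j·y^(ν_j). Suppose there is a real P > 0 such that: (i) for every y ∈ (0, P) the series ∑_k N k · y^(w k) converges, D(y) ≠ 0, and ∑_k N k · y^(w k) = Nm(y)/D(y); (ii) D(P) = 0 and Nm(P) ≠ 0. Then the capacity C = limsup_{k→∞} (ln (N k))/(w k) equals −ln P. -/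

import Mathlib

/-- A weight sequence: strictly increasing and nonnegative. -/
def IsWeightSeq (w : ℕ → ℝ) : Prop :=
  StrictMono w ∧ ∀ k, 0 ≤ w k

/-- The density condition: the number of indices `k` with `w k < n` is at most `L * n ^ K`. -/
def DensityCond (w : ℕ → ℝ) : Prop :=
  ∃ L K : ℝ, 0 ≤ L ∧ 0 ≤ K ∧ ∀ n : ℕ,
    {k : ℕ | w k < (n : ℝ)}.Finite ∧
    ((Set.ncard {k : ℕ | w k < (n : ℝ)} : ℝ) ≤ L * (n : ℝ) ^ K)

/-!
Convergence of `∑ N k * y ^ w k` forces its terms to tend to zero, so `log (N k) / w k ≤ -log y`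
eventually; hence the capacity `C` is at most `-log P`. Conversely, the density condition makes
`w k` eventually exceed every multiple of `log k`, so `∑ exp (-δ * w k)` converges for all `δ > 0`;
if `C < -log P` the series would therefore converge at some `z > P`, and its value at `z` would
bound the nonnegative function `Nm / D` on `(0, P)`. This is impossible, since `D P = 0 ≠ Nm P`
makes `|Nm y / D y| → ∞` as `y → P⁻`.
-/

open Filter Real Set Topology

theorem natCast_add_one_le_of_ncard_le {w : ℕ → ℝ} {L K : ℝ} (hL : 0 ≤ L) (hK : 0 ≤ K)
    (h : ∀ n : ℕ, {k : ℕ | w k < (n : ℝ)}.Finite ∧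
      ((Set.ncard {k : ℕ | w k < (n : ℝ)} : ℝ) ≤ L * (n : ℝ) ^ K))
    (hw : Monotone w) {k : ℕ} (hk : 0 ≤ w k) : (k : ℝ) + 1 ≤ L * (w k + 1) ^ K := by
  set m := ⌊w k⌋₊ + 1
  have hsub : (Finset.Iic k : Set ℕ) ⊆ {j : ℕ | w j < (m : ℝ)} := fun j hj =>
    (hw (Finset.mem_Iic.1 hj)).trans_lt (by simpa [m] using Nat.lt_floor_add_one (w k))
  have hcard := Set.ncard_le_ncard hsub (h m).1
  rw [Set.ncard_coe_finset, Nat.card_Iic] at hcard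
  calc (k : ℝ) + 1 ≤ Set.ncard {j : ℕ | w j < (m : ℝ)} := by exact_mod_cast hcard
    _ ≤ L * (m : ℝ) ^ K := (h m).2
    _ ≤ L * (w k + 1) ^ K := by
      gcongr
      simpa [m] using Nat.floor_le hk

namespace DensityCond

variable {w : ℕ → ℝ}

theorem tendsto_atTop (h : DensityCond w) : Tendsto w atTop atTop := by
  obtain ⟨L, K, -, -, h⟩ := h
  refine Filter.tendsto_atTop.2 fun b => ?_
  rw [← Nat.cofinite_eq_atTop, eventually_cofinite]
  refine (h ⌈b⌉₊).1.subset fun k hk => ?_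
  exact (not_le.1 hk).trans_le (Nat.le_ceil b)

theorem eventually_natCast_add_one_le_exp (hw : IsWeightSeq w) (h : DensityCond w)
    {δ : ℝ} (hδ : 0 < δ) : ∀ᶠ k : ℕ in atTop, (k : ℝ) + 1 ≤ exp (δ * w k) := by
  have htop := h.tendsto_atTop
  obtain ⟨L, K, hL, hK, h⟩ := h
  have hsmall : Tendsto (fun x => L * exp δ * (x ^ K * exp (-δ * x))) atTop (𝓝 0) := by
    simpa using (tendsto_rpow_mul_exp_neg_mul_atTop_nhds_zero K δ hδ).const_mul (L * exp δ)
  filter_upwards [(hsmall.comp (tendsto_atTop_add_const_right _ 1 htop)).eventually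
    (eventually_le_nhds one_pos)] with k hk
  have hexp : exp δ * exp (-δ * (w k + 1)) * exp (δ * w k) = 1 := by
    rw [← exp_add, ← exp_add, exp_eq_one_iff]; ring
  calc (k : ℝ) + 1 ≤ L * (w k + 1) ^ K := natCast_add_one_le_of_ncard_le hL hK h hw.1.monotone (hw.2 k)
    _ = L * (w k + 1) ^ K * (exp δ * exp (-δ * (w k + 1)) * exp (δ * w k)) := by
      rw [hexp, mul_one]
    _ = L * exp δ * ((w k + 1) ^ K * exp (-δ * (w k + 1))) * exp (δ * w k) := by ring
    _ ≤ 1 * exp (δ * w k) := by gcongr; exact hk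
    _ = exp (δ * w k) := one_mul _

theorem summable_exp_neg_mul (hw : IsWeightSeq w) (h : DensityCond w) {δ : ℝ} (hδ : 0 < δ) :
    Summable fun k => exp (-δ * w k) := by
  have hsum : Summable fun k : ℕ => (((k : ℝ) + 1) ^ 2)⁻¹ := by
    exact_mod_cast (summable_nat_add_iff 1).2 (Real.summable_nat_pow_inv.2 one_lt_two)
  refine hsum.of_norm_bounded_eventually_nat ?_
  filter_upwards [h.eventually_natCast_add_one_le_exp hw (half_pos hδ)] with k hk
  calc ‖exp (-δ * w k)‖ = (exp (δ / 2 * w k) ^ 2)⁻¹ := by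
        rw [norm_of_nonneg (exp_nonneg _), ← exp_nat_mul, ← exp_neg]; ring_nf
    _ ≤ (((k : ℝ) + 1) ^ 2)⁻¹ := by gcongr

end DensityCond

section GeneratingSeries

variable {N w : ℕ → ℝ}

theorem eventually_log_div_le_neg_log_of_summable (hN : ∀ k, 0 < N k)
    (hw : ∀ᶠ k in atTop, 0 < w k) {y : ℝ} (hy : 0 < y) (hs : Summable fun k => N k * y ^ w k) :
    ∀ᶠ k in atTop, log (N k) / w k ≤ -log y := by
  filter_upwards [hs.tendsto_atTop_zero.eventually (eventually_le_nhds one_pos), hw] with k hk hwk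
  have hlog : log (N k) + w k * log y ≤ 0 := by
    rw [← log_rpow hy, ← log_mul (hN k).ne' (rpow_pos_of_pos hy _).ne']
    exact log_nonpos (mul_nonneg (hN k).le (rpow_nonneg hy.le _)) hk
  rw [div_le_iff₀ hwk]
  linarith

theorem limsup_log_div_le_neg_log (hN : ∀ k, 0 < N k) (hw : ∀ᶠ k in atTop, 0 < w k)
    (hcobdd : IsCoboundedUnder (· ≤ ·) atTop fun k => log (N k) / w k) {P : ℝ} (hP : 0 < P)
    (hs : ∀ y ∈ Ioo 0 P, Summable fun k => N k * y ^ w k) :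
    limsup (fun k => log (N k) / w k) atTop ≤ -log P := by
  refine le_of_forall_gt_imp_ge_of_dense fun c hc => ?_
  have hy : exp (-c) ∈ Ioo 0 P := ⟨exp_pos _, (lt_log_iff_exp_lt hP).1 (by linarith)⟩
  simpa using limsup_le_of_le hcobdd
    (eventually_log_div_le_neg_log_of_summable hN hw hy.1 (hs _ hy))

theorem summable_mul_exp_rpow_of_eventually_log_div_le (hN : ∀ k, 0 < N k)
    (hw : ∀ᶠ k in atTop, 0 < w k) {c δ : ℝ} (hc : ∀ᶠ k in atTop, log (N k) / w k ≤ c)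
    (hδ : Summable fun k => exp (-δ * w k)) :
    Summable fun k => N k * exp (-(c + δ)) ^ w k := by
  refine hδ.of_norm_bounded_eventually_nat ?_
  filter_upwards [hc, hw] with k hk hwk
  rw [div_le_iff₀ hwk] at hk
  calc ‖N k * exp (-(c + δ)) ^ w k‖ = exp (log (N k) - (c + δ) * w k) := by
        rw [norm_of_nonneg (mul_nonneg (hN k).le (rpow_nonneg (exp_nonneg _) _)), ← exp_mul,
          sub_eq_add_neg, exp_add, exp_log (hN k), neg_mul]
    _ ≤ exp (-δ * w k) := by gcongr; linarith

theorem exists_gt_summable_mul_rpow_of_limsup_lt (hw : IsWeightSeq w) (hdens : DensityCond w)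
    (hN : ∀ k, 0 < N k) (hbdd : IsBoundedUnder (· ≤ ·) atTop fun k => log (N k) / w k)
    {P : ℝ} (hP : 0 < P) (hlt : limsup (fun k => log (N k) / w k) atTop < -log P) :
    ∃ y, P < y ∧ Summable fun k => N k * y ^ w k := by
  obtain ⟨c, hc, hcP⟩ := exists_between hlt
  obtain ⟨δ, hδ, hcδ⟩ : ∃ δ, 0 < δ ∧ c + δ < -log P :=
    ⟨(-log P - c) / 2, by linarith, by linarith⟩
  refine ⟨exp (-(c + δ)), (log_lt_iff_lt_exp hP).1 (by linarith), ?_⟩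
  exact summable_mul_exp_rpow_of_eventually_log_div_le hN
    (hdens.tendsto_atTop.eventually_gt_atTop 0)
    ((eventually_lt_of_limsup_lt hc hbdd).mono fun _ => le_of_lt)
    (hdens.summable_exp_neg_mul hw hδ)

theorem tsum_mul_rpow_le_of_le (hN : ∀ k, 0 ≤ N k) (hw : ∀ k, 0 ≤ w k) {y z : ℝ} (hy : 0 ≤ y)
    (hyz : y ≤ z) (hs : Summable fun k => N k * z ^ w k) :
    ∑' k, N k * y ^ w k ≤ ∑' k, N k * z ^ w k := by
  have hle (k : ℕ) : N k * y ^ w k ≤ N k * z ^ w k :=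
    mul_le_mul_of_nonneg_left (rpow_le_rpow hy hyz (hw k)) (hN k)
  exact (hs.of_nonneg_of_le (fun k => mul_nonneg (hN k) (rpow_nonneg hy _)) hle).tsum_le_tsum hle hs

end GeneratingSeries

theorem Filter.Tendsto.norm_div_atTop_of_nhdsNE_zero {α 𝕜 : Type*} [NormedField 𝕜]
    {l : Filter α} {f g : α → 𝕜} {a : 𝕜} (hf : Tendsto f l (𝓝 a)) (ha : a ≠ 0)
    (hg : Tendsto g l (𝓝[≠] 0)) : Tendsto (fun x => ‖f x / g x‖) l atTop := by
  simpa [norm_div, div_eq_mul_inv] using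
    hf.norm.pos_mul_atTop (norm_pos_iff.2 ha) (tendsto_norm_inv_nhdsNE_zero_atTop.comp hg)

theorem continuousAt_sum_mul_rpow {ι : Type*} (s : Finset ι) (c e : ι → ℝ) {x : ℝ} (hx : x ≠ 0) :
    ContinuousAt (fun y => ∑ i ∈ s, c i * y ^ e i) x := by
  fun_prop (disch := exact Or.inl hx)

theorem capacity_eq_neg_log_pole_general (w N : ℕ → ℝ)
    (hw : IsWeightSeq w) (hdens : DensityCond w)
    (hN : ∀ k, 1 ≤ N k)
    (p q : ℕ)
    (n : Fin p → ℝ) (d : Fin q → ℝ)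
    (τ : Fin p → ℝ)
    (ν : Fin q → ℝ)
    (Nm D : ℝ → ℝ)
    (hNm : ∀ y : ℝ, Nm y = ∑ i, n i * y ^ (τ i))
    (hD : ∀ y : ℝ, D y = ∑ j, d j * y ^ (ν j))
    (P : ℝ) (hP : 0 < P)
    (hconv : ∀ y ∈ Set.Ioo (0 : ℝ) P,
      Summable (fun k => N k * y ^ (w k)) ∧ D y ≠ 0 ∧
        (∑' k, N k * y ^ (w k)) = Nm y / D y)
    (hDP : D P = 0) (hNmP : Nm P ≠ 0) :
    Filter.atTop.limsup (fun k => Real.log (N k) / w k) = -Real.log P := by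
  have hN0 (k : ℕ) : 0 < N k := one_pos.trans_le (hN k)
  have hw0 : ∀ᶠ k in atTop, 0 < w k := hdens.tendsto_atTop.eventually_gt_atTop 0
  have hbdd : IsBoundedUnder (· ≤ ·) atTop fun k => log (N k) / w k :=
    isBoundedUnder_of_eventually_le <| eventually_log_div_le_neg_log_of_summable hN0 hw0
      (half_pos hP) (hconv _ ⟨half_pos hP, half_lt_self hP⟩).1
  have hcobdd : IsCoboundedUnder (· ≤ ·) atTop fun k => log (N k) / w k :=
    isCoboundedUnder_le_of_eventually_le _ <|
      hw0.mono fun k hk => div_nonneg (log_nonneg (hN k)) hk.le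
  refine le_antisymm (limsup_log_div_le_neg_log hN0 hw0 hcobdd hP fun y hy => (hconv y hy).1) ?_
  by_contra! hlt
  obtain ⟨z, hPz, hsum⟩ := exists_gt_summable_mul_rpow_of_limsup_lt hw hdens hN0 hbdd hP hlt
  have hNm_cont : ContinuousAt Nm P := by
    simpa only [← hNm] using continuousAt_sum_mul_rpow Finset.univ n τ hP.ne'
  have hD_cont : ContinuousAt D P := by
    simpa only [← hD] using continuousAt_sum_mul_rpow Finset.univ d ν hP.ne'
  have hpole : Tendsto (fun y => ‖Nm y / D y‖) (𝓝[<] P) atTop :=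
    (hNm_cont.tendsto.mono_left nhdsWithin_le_nhds).norm_div_atTop_of_nhdsNE_zero hNmP <|
      tendsto_nhdsWithin_iff.2 ⟨hDP ▸ hD_cont.tendsto.mono_left nhdsWithin_le_nhds,
        mem_of_superset (Ioo_mem_nhdsLT hP) fun y hy => (hconv y hy).2.1⟩
  obtain ⟨y, hy_big, hy⟩ := ((hpole.eventually_gt_atTop _).and (Ioo_mem_nhdsLT hP)).exists
  obtain ⟨-, -, heq⟩ := hconv y hy
  rw [← heq, norm_of_nonneg (tsum_nonneg fun k => mul_nonneg (hN0 k).le (rpow_nonneg hy.1.le _))]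
    at hy_big
  exact hy_big.not_ge <|
    tsum_mul_rpow_le_of_le (fun k => (hN0 k).le) hw.2 hy.1.le (hy.2.trans hPz).le hsum

/-- Capacity from the smallest positive pole of a generating function that is a
ratio of generalized polynomials. -/
theorem capacity_eq_neg_log_pole (w N : ℕ → ℝ)
    (hw : IsWeightSeq w) (hdens : DensityCond w)
    (hN : ∀ k, 1 ≤ N k)
    (p q : ℕ) (hp : 1 ≤ p) (hq : 1 ≤ q)
    (n : Fin p → ℝ) (d : Fin q → ℝ)
    (τ : Fin p → ℝ) (hτ : ∀ i, 0 ≤ τ i)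
    (ν : Fin q → ℝ) (hν : ∀ j, 0 ≤ ν j)
    (Nm D : ℝ → ℝ)
    (hNm : ∀ y : ℝ, Nm y = ∑ i, n i * y ^ (τ i))
    (hD : ∀ y : ℝ, D y = ∑ j, d j * y ^ (ν j))
    (P : ℝ) (hP : 0 < P)
    (hconv : ∀ y ∈ Set.Ioo (0 : ℝ) P,
      Summable (fun k => N k * y ^ (w k)) ∧ D y ≠ 0 ∧
        (∑' k, N k * y ^ (w k)) = Nm y / D y)
    (hDP : D P = 0) (hNmP : Nm P ≠ 0) :
    Filter.atTop.limsup (fun k => Real.log (N k) / w k) = -Real.log P :=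
  capacity_eq_neg_log_pole_general w N hw hdens hN p q n d τ ν Nm D hNm hD P hP hconv hDP hNmP
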